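/- arXiv:2002.02396 — 2 statements merged into one kernel-verified Lean document; each statement's English description precedes it below -/
import Mathlib

section
/- Let T be a tree of height ω₁ and cardinality ℵ₁ with no uncountable chain, and let W be an uncountable collection of pairwise disjoint finite subsets of T. Then there exist distinct s, s′ ∈ W such that every x ∈ s is incomparable in T with every y ∈ s′. -/
universe u

open Cardinal Ordinal Set Classical

noncomputable def omega1 : Ordinal.{u} := (Cardinal.aleph 1).ord

/-- A tree: a partial order in which the set of strict predecessors of each element
is well-ordered by `<`. -/
def IsTree (T : Type u) [PartialOrder T] : Prop :=
  ∀ x : T, IsWellOrder {y : T // y < x} (fun a b => (a : T) < (b : T))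

/-- The height of an element of a tree: the order type of its set of strict predecessors. -/
noncomputable def treeHeight {T : Type u} [PartialOrder T] (x : T) : Ordinal.{u} :=
  if h : IsWellOrder {y : T // y < x} (fun a b => (a : T) < (b : T)) then
    @Ordinal.type _ _ h else 0

/-- The tree has height `ω₁`: every level below `ω₁` is nonempty and the level `ω₁` is empty
(equivalently, all heights are `< ω₁`). -/
def HasHeightOmega1 (T : Type u) [PartialOrder T] : Prop :=
  (∀ α : Ordinal.{u}, α < omega1.{u} → ∃ x : T, treeHeight x = α) ∧
    ∀ x : T, treeHeight x < omega1.{u}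

def NoUncountableChain (T : Type u) [PartialOrder T] : Prop :=
  ∀ C : Set T, IsChain (· < ·) C → C.Countable

def IsWideAronszajn (T : Type u) [PartialOrder T] : Prop :=
  IsTree T ∧ Cardinal.mk T = Cardinal.aleph.{u} 1 ∧ HasHeightOmega1 T ∧ NoUncountableChain T

def IsAronszajn (T : Type u) [PartialOrder T] : Prop :=
  IsTree T ∧ HasHeightOmega1 T ∧
    (∀ α : Ordinal.{u}, {x : T | treeHeight x = α}.Countable) ∧ NoUncountableChain T

def IsWeakEmbedding {T₁ T₂ : Type u} [PartialOrder T₁] [PartialOrder T₂] (f : T₁ → T₂) : Prop :=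
  ∀ x y : T₁, x < y → f x < f y

/-- Martin's axiom for ℵ₁ many dense sets. -/
def MAomega1 : Prop :=
  ∀ (P : Type u) [PartialOrder P], Nonempty P →
    (∀ A : Set P, (A.Pairwise fun p q => ¬ ∃ r, p ≤ r ∧ q ≤ r) → A.Countable) →
    ∀ 𝒟 : Set (Set P), Cardinal.mk 𝒟 ≤ Cardinal.aleph.{u} 1 →
      (∀ D ∈ 𝒟, ∀ p : P, ∃ q ∈ D, p ≤ q) →
      ∃ G : Set P, (∀ p ∈ G, ∀ q ∈ G, ∃ r ∈ G, p ≤ r ∧ q ≤ r) ∧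
        (∀ p ∈ G, ∀ q, q ≤ p → q ∈ G) ∧ ∀ D ∈ 𝒟, (G ∩ D).Nonempty

/-- A bundled partially ordered type. -/
structure PoType : Type (u + 1) where
  carrier : Type u
  str : PartialOrder carrier

attribute [instance] PoType.str

/-! Suppose every two members of the family contain comparable points, and fix an ultrafilter `D`
on the family containing all co-countable sets. A point has only countably many predecessors and
lies in at most one member, so for each member `s` almost every member lies above it: there are
`x_s ∈ s` and a position `j_s` such that `x_s` is below the `j_s`-th point of `D`-almost every
member. Uncountably many `s` share the same `j`, and any two of their points `x_s` lie below a
common point, so they form an uncountable chain. -/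

open Filter Function Relation

theorem IsTree.isChain_Iio {T : Type u} [PartialOrder T] (ht : IsTree T) (z : T) :
    IsChain (· < ·) (Iio z) := by
  intro y hy y' hy' hne
  have := ht z
  rcases trichotomous_of (fun a b : {y : T // y < z} => (a : T) < b) ⟨y, hy⟩ ⟨y', hy'⟩
    with h | h | h
  · exact Or.inl h
  · exact absurd (congrArg Subtype.val h) hne
  · exact Or.inr h

theorem Set.exists_not_countable_fiber {α β : Type*} [Countable β] {s : Set α}
    (hs : ¬ s.Countable) (f : α → β) : ∃ b, ¬ {a ∈ s | f a = b}.Countable := by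
  by_contra! h
  refine hs ((countable_iUnion h).mono fun a ha => mem_iUnion_of_mem (f a) ?_)
  exact ⟨ha, rfl⟩

instance Filter.cocountable_neBot {α : Type*} [Uncountable α] :
    (cocountable : Filter α).NeBot :=
  ⟨fun h => not_countable_univ (by simpa using mem_cocountable.1 (empty_mem_iff_bot.2 h))⟩

theorem Filter.eventually_cocountable_notMem {α : Type*} {s : Set α} (hs : s.Countable) :
    ∀ᶠ x in cocountable, x ∉ s :=
  mem_cocountable.2 ((compl_compl s).symm ▸ hs)

section DisjointFamily

variable {T ι κ : Type*} {f : ι → κ → T}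

theorem countable_setOf_exists_apply_mem (hf : Pairwise (Disjoint on fun i => range (f i)))
    {S : Set T} (hS : S.Countable) : {i | ∃ k, f i k ∈ S}.Countable := by
  refine (hS.biUnion fun y _ => Set.Subsingleton.countable (s := {i | ∃ k, f i k = y}) ?_).mono ?_
  · rintro i ⟨k, rfl⟩ i' ⟨k', hk'⟩
    by_contra hne
    exact Set.disjoint_left.1 (hf hne) ⟨k, rfl⟩ ⟨k', hk'⟩
  · rintro i ⟨k, hk⟩
    exact mem_biUnion hk ⟨k, rfl⟩

theorem exists_eventually_lt [PartialOrder T] [Finite κ] (hIio : ∀ z : T, (Iio z).Countable)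
    (hf : Pairwise (Disjoint on fun i => range (f i)))
    (hlink : ∀ i i', i ≠ i' → ∃ k k', SymmGen (· ≤ ·) (f i k) (f i' k'))
    (D : Ultrafilter ι) (hD : ↑D ≤ (cocountable : Filter ι)) (i : ι) :
    ∃ k k', ∀ᶠ i' in D, f i k < f i' k' := by
  have hne : ∀ᶠ i' in D, i' ≠ i := hD (eventually_cocountable_notMem (countable_singleton i))
  have hnot_below : ∀ᶠ i' in D, i' ∉ {i' | ∃ k', f i' k' ∈ ⋃ k, Iio (f i k)} :=
    hD (eventually_cocountable_notMem
      (countable_setOf_exists_apply_mem hf (countable_iUnion fun k => hIio (f i k))))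
  have hup : ∀ᶠ i' in D, ∃ kk' : κ × κ, f i kk'.1 < f i' kk'.2 := by
    filter_upwards [hne, hnot_below] with i' hi' hbelow
    obtain ⟨k, k', hcomp⟩ := hlink i i' hi'.symm
    have hk : f i k ≠ f i' k' := fun h => Set.disjoint_left.1 (hf hi'.symm) ⟨k, rfl⟩ ⟨k', h.symm⟩
    rcases hcomp with hle | hle
    · exact ⟨(k, k'), hle.lt_of_ne hk⟩
    · exact absurd ⟨k', mem_iUnion.2 ⟨k, hle.lt_of_ne hk.symm⟩⟩ hbelow
  obtain ⟨⟨k, k'⟩, h⟩ := Ultrafilter.eventually_exists_iff.1 hup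
  exact ⟨k, k', h⟩

end DisjointFamily

theorem exists_ne_forall_incompRel {T : Type u} {ι κ : Type*} [PartialOrder T]
    [Uncountable ι] [Finite κ] (hIio : ∀ z : T, IsChain (· < ·) (Iio z))
    (hch : NoUncountableChain T) (f : ι → κ → T)
    (hf : Pairwise (Disjoint on fun i => range (f i))) :
    ∃ i i', i ≠ i' ∧ ∀ k k', IncompRel (· ≤ ·) (f i k) (f i' k') := by
  by_contra! hlink
  simp only [not_incompRel_iff_symmGen] at hlink
  let D := Ultrafilter.of (cocountable : Filter ι)
  choose k k' hup using exists_eventually_lt (fun z => hch _ (hIio z)) hf hlink D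
    (Ultrafilter.of_le _)
  obtain ⟨c, hc⟩ := exists_not_countable_fiber not_countable_univ k'
  simp only [mem_univ, true_and] at hc
  have hchain : IsChain (· < ·) ((fun i => f i (k i)) '' {i | k' i = c}) := by
    rintro _ ⟨i, hi, rfl⟩ _ ⟨j, hj, rfl⟩ hne
    obtain ⟨ρ, hiρ, hjρ⟩ := ((hup i).and (hup j)).exists
    exact hIio (f ρ c) (hi ▸ hiρ) (hj ▸ hjρ) hne
  refine hc (countable_of_injective_of_countable_image (fun i _ j _ hij => ?_) (hch _ hchain))
  by_contra hne
  exact Set.disjoint_left.1 (hf hne) ⟨k i, rfl⟩ ⟨k j, hij.symm⟩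

theorem pairwise_disjoint_finite_sets_incomparable_general {T : Type u} [PartialOrder T]
    (ht : IsTree T)
    (hch : NoUncountableChain T)
    (W : Set (Finset T)) (hW : ¬ W.Countable)
    (hdisj : W.Pairwise fun s s' => ∀ x ∈ s, x ∉ s') :
    ∃ s ∈ W, ∃ s' ∈ W, s ≠ s' ∧ ∀ x ∈ s, ∀ y ∈ s', ¬ x ≤ y ∧ ¬ y ≤ x := by
  obtain ⟨n, hn⟩ := exists_not_countable_fiber hW Finset.card
  have : Uncountable {s ∈ W | s.card = n} := not_countable_iff.1 (countable_coe_iff.not.2 hn)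
  let f (s : {s ∈ W | s.card = n}) : Fin n → T := fun k => (s.1.equivFinOfCardEq s.2.2).symm k
  have hf_mem (s) (k) : f s k ∈ s.1 := ((s.1.equivFinOfCardEq s.2.2).symm k).2
  have hf_surj (s : {s ∈ W | s.card = n}) (x) (hx : x ∈ s.1) : ∃ k, f s k = x :=
    ⟨s.1.equivFinOfCardEq s.2.2 ⟨x, hx⟩, by simp [f]⟩
  have hf : Pairwise (Disjoint on fun s => range (f s)) := by
    rintro s s' hne
    refine Set.disjoint_left.2 ?_
    rintro _ ⟨k, rfl⟩ ⟨k', hk'⟩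
    exact hdisj s.2.1 s'.2.1 (Subtype.coe_injective.ne hne) _ (hf_mem s k) (hk' ▸ hf_mem s' k')
  obtain ⟨s, s', hne, hinc⟩ := exists_ne_forall_incompRel ht.isChain_Iio hch f hf
  refine ⟨s, s.2.1, s', s'.2.1, Subtype.coe_injective.ne hne, fun x hx y hy => ?_⟩
  obtain ⟨k, rfl⟩ := hf_surj s x hx
  obtain ⟨k', rfl⟩ := hf_surj s' y hy
  exact hinc k k'

/-- Baumgartner–Malitz–Reinhardt: in a tree of height and cardinality `ω₁` with no
uncountable chain, any uncountable family of pairwise disjoint finite sets contains two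
sets any two elements of which are incomparable. -/
theorem pairwise_disjoint_finite_sets_incomparable {T : Type u} [PartialOrder T]
    (ht : IsTree T) (hht : HasHeightOmega1 T)
    (hcard : Cardinal.mk T = Cardinal.aleph.{u} 1) (hch : NoUncountableChain T)
    (W : Set (Finset T)) (hW : ¬ W.Countable)
    (hdisj : W.Pairwise fun s s' => ∀ x ∈ s, x ∉ s') :
    ∃ s ∈ W, ∃ s' ∈ W, s ≠ s' ∧ ∀ x ∈ s, ∀ y ∈ s', ¬ x ≤ y ∧ ¬ y ≤ x :=
  pairwise_disjoint_finite_sets_incomparable_general ht hch W hW hdisj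
end

section
/- Let δ < ω₁ be a limit ordinal and let y ∈ T with ht(y) = δ. Then every condition p ∈ Q(T) such that uᵖ contains an element x with ht(x) = δ has an extension q with y ∈ v^q; consequently the set ℰ_y = {q ∈ Q(T) : y ∈ v^q} is dense in Q(T). -/
universe u

open Cardinal Ordinal Set Classical

/-- Nodes: the root `none` together with the ordinals below `ω₁`. -/
abbrev Node : Type := Option omega1.{0}.ToType

/-- The ordinal below `ω₁` coded by an element of `omega1.toType`. -/
noncomputable def oVal (γ : omega1.{0}.ToType) : Ordinal.{0} :=
  ((Ordinal.ToType.mk (o := omega1.{0})).symm γ : Set.Iio omega1.{0})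

/-- `ht γ`: the unique `α` with `ω·α ≤ γ < ω·α + ω`, i.e. `γ / ω`; the root gets `⊥`,
regarded as smaller than every ordinal. -/
noncomputable def nodeHt : Node → WithBot Ordinal.{0}
  | none => ⊥
  | some γ => (↑(oVal γ / Ordinal.omega0) : WithBot Ordinal.{0})

def pLe {X : Type*} (lt : X → X → Prop) (a b : X) : Prop := lt a b ∨ a = b

/-- `m` is the meet (greatest common lower bound) of `x` and `y` inside `A`
with respect to the strict relation `lt`. -/
def IsMeetIn {X : Type*} (lt : X → X → Prop) (A : Set X) (x y m : X) : Prop :=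
  m ∈ A ∧ pLe lt m x ∧ pLe lt m y ∧ ∀ z ∈ A, pLe lt z x → pLe lt z y → pLe lt z m

/-- `lt` is a strict partial order with field inside `A`. -/
def StrictOrderOn {X : Type*} (A : Set X) (lt : X → X → Prop) : Prop :=
  (∀ x y, lt x y → x ∈ A ∧ y ∈ A) ∧ (∀ x, ¬ lt x x) ∧
    ∀ x y z, lt x y → lt y z → lt x z

/-- `lt` is a tree order on `A`: a strict partial order whose sets of strict
predecessors are well-ordered. -/
def TreeOrderOn {X : Type*} (A : Set X) (lt : X → X → Prop) : Prop :=
  StrictOrderOn A lt ∧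
  (∀ x ∈ A, ∀ y z, lt y x → lt z x → lt y z ∨ lt z y ∨ y = z) ∧
  ∀ x ∈ A, Set.WellFoundedOn {y | lt y x} lt

/-- The height of `x`: the order type of its set of strict `lt`-predecessors. -/
noncomputable def relHeight {X : Type u} (lt : X → X → Prop) (x : X) : Ordinal.{u} :=
  if h : IsWellOrder {y : X // lt y x} (fun a b => lt a.1 b.1) then @Ordinal.type _ _ h
  else 0

/-- `(A, lt)` is an Aronszajn tree: a tree of height `ω₁` with countable levels and no
uncountable chain. -/
def AronszajnOn {X : Type u} (A : Set X) (lt : X → X → Prop) : Prop :=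
  TreeOrderOn A lt ∧
  (∀ α : Ordinal.{u}, α < omega1.{u} → ∃ x ∈ A, relHeight lt x = α) ∧
  (∀ x ∈ A, relHeight lt x < omega1.{u}) ∧
  (∀ α : Ordinal.{u}, {x ∈ A | relHeight lt x = α}.Countable) ∧
  ∀ C ⊆ A, (∀ x ∈ C, ∀ y ∈ C, x ≠ y → lt x y ∨ lt y x) → C.Countable

/-- The ambient tree `T` of the forcing `Q(T)`: carrier `Tc ∋ none` (the root `r`),
strict order `ltT` with minimum the root, tree, heights of the nodes `γ ∈ S ⊆ ω₁`
equal to `γ / ω`, height `ω₁`, no uncountable chain, meets given by `meetT`. -/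
def AmbientOK (Tc : Set Node) (ltT : Node → Node → Prop)
    (meetT : Node → Node → Node) : Prop :=
  none ∈ Tc ∧
  StrictOrderOn Tc ltT ∧
  (∀ x ∈ Tc, x ≠ none → ltT none x) ∧
  (∀ x ∈ Tc, ∀ y z, ltT y x → ltT z x → ltT y z ∨ ltT z y ∨ y = z) ∧
  (∀ x ∈ Tc, Set.WellFoundedOn {y | ltT y x} ltT) ∧
  (∀ γ : omega1.{0}.ToType, some γ ∈ Tc →
      relHeight (fun a b => ltT a b ∧ a ≠ none) (some γ) = oVal γ / Ordinal.omega0) ∧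
  (∀ α : Ordinal.{0}, α < omega1.{0} →
      ∃ γ : omega1.{0}.ToType, some γ ∈ Tc ∧ oVal γ / Ordinal.omega0 = α) ∧
  (∀ C ⊆ Tc, (∀ x ∈ C, ∀ y ∈ C, x ≠ y → ltT x y ∨ ltT y x) → C.Countable) ∧
  ∀ x ∈ Tc, ∀ y ∈ Tc, IsMeetIn ltT Tc x y (meetT x y)

/-- A condition of the forcing `Q(T)`. -/
structure QCond : Type 1 where
  u : Finset Node
  v : Finset Node
  lt : Node → Node → Prop
  c : Node → Node → Option ℕ

/-- The requirements making `p` a condition of `Q(T)`. -/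
structure QValid (Tc : Set Node) (ltT : Node → Node → Prop)
    (meetT : Node → Node → Node) (p : QCond) : Prop where
  root_u : none ∈ p.u
  root_v : none ∈ p.v
  v_sub : ∀ y ∈ p.v, y ∈ Tc
  v_ht : ∀ y ∈ p.v, ∃ x ∈ p.u, nodeHt x = nodeHt y
  lt_dom : ∀ x y : Node, p.lt x y → x ∈ p.u ∧ y ∈ p.u
  lt_irrefl : ∀ x : Node, ¬ p.lt x x
  lt_trans : ∀ x y z : Node, p.lt x y → p.lt y z → p.lt x z
  lt_root : ∀ x ∈ p.u, x ≠ none → p.lt none x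
  lt_ht : ∀ x y : Node, p.lt x y → nodeHt x < nodeHt y
  lt_pred_linear : ∀ x y z : Node, p.lt x z → p.lt y z → p.lt x y ∨ p.lt y x ∨ x = y
  lt_meet : ∀ x ∈ p.u, ∀ y ∈ p.u, ∃ m : Node, IsMeetIn p.lt ↑p.u x y m
  c_dom : ∀ x y : Node, p.c x y ≠ none ↔
    (x ∈ p.u ∧ y ∈ p.v ∧ nodeHt x = nodeHt y ∧
      ∃ δ : Ordinal.{0}, Order.IsSuccLimit δ ∧ nodeHt x = (↑δ : WithBot Ordinal.{0}))
  c_spec : ∀ x₁ y₁ x₂ y₂ : Node, ∀ n : ℕ, p.c x₁ y₁ = some n → p.c x₂ y₂ = some n →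
    ¬ (x₁ = x₂ ∧ y₁ = y₂) →
      nodeHt x₁ ≠ nodeHt x₂ ∧
      (¬ p.lt x₁ x₂ ∧ ¬ p.lt x₂ x₁ ∧ x₁ ≠ x₂) ∧
      (¬ ltT y₁ y₂ ∧ ¬ ltT y₂ y₁ ∧ y₁ ≠ y₂) ∧
      ∀ m : Node, IsMeetIn p.lt ↑p.u x₁ x₂ m → nodeHt (meetT y₁ y₂) < nodeHt m

/-- The extension order of `Q(T)`. -/
def QLe (p q : QCond) : Prop :=
  p.u ⊆ q.u ∧ p.v ⊆ q.v ∧ (∀ x y : Node, p.lt x y → q.lt x y) ∧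
  (∀ x y : Node, ∀ n : ℕ, p.c x y = some n → q.c x y = some n) ∧
  ∀ x ∈ p.u, ∀ y ∈ p.u, ∀ m : Node,
    IsMeetIn p.lt ↑p.u x y m → IsMeetIn q.lt ↑q.u x y m

/-!
To put `y` into `v`, the condition must have a node of the same height in `u`. If it has none,
`y` itself can be put into `u` as an immediate successor of the root: this changes no meet of
old nodes, and since no node of `v` has that height it creates no colouring obligation. Once such
a node is present, `y` is added to `v` and every new pair `(a, y)` gets its own fresh colour, so
the colouring condition never compares two different pairs sharing a new colour.
-/

lemma IsMeetIn.symm {X : Type*} {lt : X → X → Prop} {A : Set X} {x y m : X}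
    (h : IsMeetIn lt A x y m) : IsMeetIn lt A y x m :=
  ⟨h.1, h.2.2.1, h.2.1, fun z hz hzy hzx => h.2.2.2 z hz hzx hzy⟩

lemma nodeHt_none_lt {x : Node} (hx : x ≠ none) : nodeHt none < nodeHt x := by
  obtain ⟨γ, rfl⟩ := Option.ne_none_iff_exists'.mp hx
  exact WithBot.bot_lt_coe _

lemma QLe.refl (p : QCond) : QLe p p :=
  ⟨subset_rfl, subset_rfl, fun _ _ h => h, fun _ _ _ h => h, fun _ _ _ _ _ h => h⟩

lemma QLe.trans {p q r : QCond} (hpq : QLe p q) (hqr : QLe q r) : QLe p r :=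
  ⟨hpq.1.trans hqr.1, hpq.2.1.trans hqr.2.1, fun x y h => hqr.2.2.1 x y (hpq.2.2.1 x y h),
    fun x y n h => hqr.2.2.2.1 x y n (hpq.2.2.2.1 x y n h),
    fun x hx y hy m hm => hqr.2.2.2.2 x (hpq.1 hx) y (hpq.1 hy) m (hpq.2.2.2.2 x hx y hy m hm)⟩

noncomputable def QCond.addAboveRoot (p : QCond) (x : Node) : QCond where
  u := insert x p.u
  v := p.v
  lt a b := p.lt a b ∨ (a = none ∧ b = x)
  c := p.c

lemma QCond.addAboveRoot_lt_iff {p : QCond} {x w a : Node} (hxu : x ∉ p.u) (ha : a ∈ p.u) :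
    (p.addAboveRoot x).lt w a ↔ p.lt w a := by
  have hax : a ≠ x := fun h => hxu (h ▸ ha)
  simp only [QCond.addAboveRoot, hax, and_false, or_false]

lemma QCond.pLe_addAboveRoot_iff {p : QCond} {x w a : Node} (hxu : x ∉ p.u) (ha : a ∈ p.u) :
    pLe (p.addAboveRoot x).lt w a ↔ pLe p.lt w a := by
  rw [pLe, pLe, QCond.addAboveRoot_lt_iff hxu ha]

noncomputable def QCond.addToV (p : QCond) (y : Node) (col : Node → ℕ) : QCond where
  u := p.u
  v := insert y p.v
  lt := p.lt
  c a b := if b = y ∧ a ∈ p.u ∧ nodeHt a = nodeHt y ∧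
      ∃ δ : Ordinal.{0}, Order.IsSuccLimit δ ∧ nodeHt a = δ then some (col a) else p.c a b

namespace QValid

variable {Tc : Set Node} {ltT : Node → Node → Prop} {meetT : Node → Node → Node} {p : QCond}
  {x y : Node} {col : Node → ℕ}

lemma mem_of_c_eq_some (hp : QValid Tc ltT meetT p) {a b : Node} {n : ℕ}
    (h : p.c a b = some n) : a ∈ p.u ∧ b ∈ p.v :=
  let hdom := (hp.c_dom a b).mp (by simp [h])
  ⟨hdom.1, hdom.2.1⟩

lemma mem_u_of_pLe (hp : QValid Tc ltT meetT p) {w a : Node} (ha : a ∈ p.u)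
    (h : pLe p.lt w a) : w ∈ p.u := by
  rcases h with h | rfl
  exacts [(hp.lt_dom w a h).1, ha]

lemma exists_color_bound (hp : QValid Tc ltT meetT p) :
    ∃ N : ℕ, ∀ a b n, p.c a b = some n → n < N := by
  have hfin : {n | ∃ a b, p.c a b = some n}.Finite := by
    refine ((p.u ×ˢ p.v).finite_toSet.image fun ab => (p.c ab.1 ab.2).getD 0).subset ?_
    rintro n ⟨a, b, h⟩
    have hab := hp.mem_of_c_eq_some h
    exact ⟨(a, b), Finset.mem_coe.mpr (Finset.mem_product.mpr hab), by simp [h]⟩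
  obtain ⟨N, hN⟩ := hfin.bddAbove
  exact ⟨N + 1, fun a b n h => Nat.lt_succ_of_le (hN ⟨a, b, h⟩)⟩

lemma isMeetIn_addAboveRoot_iff (hp : QValid Tc ltT meetT p) (hxu : x ∉ p.u) {a b m : Node}
    (ha : a ∈ p.u) (hb : b ∈ p.u) :
    IsMeetIn (p.addAboveRoot x).lt ↑(p.addAboveRoot x).u a b m ↔ IsMeetIn p.lt ↑p.u a b m := by
  simp only [IsMeetIn, QCond.pLe_addAboveRoot_iff hxu ha, QCond.pLe_addAboveRoot_iff hxu hb]
  constructor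
  · rintro ⟨-, hma, hmb, hgr⟩
    have hmu := hp.mem_u_of_pLe ha hma
    refine ⟨hmu, hma, hmb, fun z hz hza hzb => ?_⟩
    exact (QCond.pLe_addAboveRoot_iff hxu hmu).mp (hgr z (Finset.mem_insert_of_mem hz) hza hzb)
  · rintro ⟨hmu, hma, hmb, hgr⟩
    refine ⟨Finset.mem_insert_of_mem hmu, hma, hmb, fun z _ hza hzb => ?_⟩
    exact (QCond.pLe_addAboveRoot_iff hxu hmu).mpr (hgr z (hp.mem_u_of_pLe ha hza) hza hzb)

lemma isMeetIn_addAboveRoot_new (hp : QValid Tc ltT meetT p) (hxu : x ∉ p.u) {a : Node}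
    (ha : a ∈ p.u) :
    IsMeetIn (p.addAboveRoot x).lt ↑(p.addAboveRoot x).u x a none := by
  refine ⟨Finset.mem_insert_of_mem hp.root_u, Or.inl (Or.inr ⟨rfl, rfl⟩), ?_, ?_⟩
  · rw [QCond.pLe_addAboveRoot_iff hxu ha]
    by_cases han : a = none
    exacts [Or.inr han.symm, Or.inl (hp.lt_root a ha han)]
  · rintro z - ((hzx | ⟨rfl, -⟩) | rfl) hza
    · exact absurd (hp.lt_dom z x hzx).2 hxu
    · exact Or.inr rfl
    · exact absurd (hp.mem_u_of_pLe ha ((QCond.pLe_addAboveRoot_iff hxu ha).mp hza)) hxu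

lemma exists_isMeetIn_addAboveRoot (hp : QValid Tc ltT meetT p) (hxu : x ∉ p.u) :
    ∀ a ∈ (p.addAboveRoot x).u, ∀ b ∈ (p.addAboveRoot x).u,
      ∃ m, IsMeetIn (p.addAboveRoot x).lt ↑(p.addAboveRoot x).u a b m := by
  intro a ha b hb
  rcases Finset.mem_insert.mp ha with hax | ha <;> rcases Finset.mem_insert.mp hb with hbx | hb
  · rw [hax, hbx]
    exact ⟨x, Finset.mem_insert_self _ _, Or.inr rfl, Or.inr rfl, fun z _ hz _ => hz⟩
  · exact ⟨none, hax ▸ hp.isMeetIn_addAboveRoot_new hxu hb⟩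
  · exact ⟨none, hbx ▸ (hp.isMeetIn_addAboveRoot_new hxu ha).symm⟩
  · obtain ⟨m, hm⟩ := hp.lt_meet a ha b hb
    exact ⟨m, (hp.isMeetIn_addAboveRoot_iff hxu ha hb).mpr hm⟩

lemma addAboveRoot (hp : QValid Tc ltT meetT p) (hx : ∀ w ∈ p.u, nodeHt w ≠ nodeHt x) :
    QValid Tc ltT meetT (p.addAboveRoot x) := by
  have hxu : x ∉ p.u := fun h => hx x h rfl
  have hxnone : x ≠ none := fun h => hxu (h ▸ hp.root_u)
  have hnot_lt_x : ∀ a, ¬ p.lt a x := fun a h => hxu (hp.lt_dom a x h).2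
  have hnot_x_lt : ∀ b, ¬ p.lt x b := fun b h => hxu (hp.lt_dom x b h).1
  have hnot_lt_none : ∀ a, ¬ p.lt a none := fun a h => not_lt_bot (hp.lt_ht a none h)
  constructor
  · exact Finset.mem_insert_of_mem hp.root_u
  · exact hp.root_v
  · exact hp.v_sub
  · intro b hb
    obtain ⟨w, hw, hwb⟩ := hp.v_ht b hb
    exact ⟨w, Finset.mem_insert_of_mem hw, hwb⟩
  · rintro a b (h | ⟨rfl, rfl⟩)
    · exact (hp.lt_dom a b h).imp Finset.mem_insert_of_mem Finset.mem_insert_of_mem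
    · exact ⟨Finset.mem_insert_of_mem hp.root_u, Finset.mem_insert_self _ _⟩
  · rintro a (h | ⟨rfl, h⟩)
    exacts [hp.lt_irrefl a h, hxnone h.symm]
  · rintro a b z (hab | ⟨rfl, rfl⟩) (hbz | ⟨rfl, rfl⟩)
    · exact Or.inl (hp.lt_trans a b z hab hbz)
    · exact absurd hab (hnot_lt_none a)
    · exact absurd hbz (hnot_x_lt z)
    · exact absurd rfl hxnone
  · intro a ha hane
    rcases Finset.mem_insert.mp ha with rfl | ha
    exacts [Or.inr ⟨rfl, rfl⟩, Or.inl (hp.lt_root a ha hane)]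
  · rintro a b (h | ⟨rfl, rfl⟩)
    exacts [hp.lt_ht a b h, nodeHt_none_lt hxnone]
  · rintro a b z (haz | ⟨rfl, rfl⟩) (hbz | ⟨rfl, hz⟩)
    · exact (hp.lt_pred_linear a b z haz hbz).imp Or.inl (Or.imp_left Or.inl)
    · exact absurd (hz ▸ haz) (hnot_lt_x a)
    · exact absurd hbz (hnot_lt_x b)
    · exact Or.inr (Or.inr rfl)
  · exact hp.exists_isMeetIn_addAboveRoot hxu
  · intro a b
    refine (hp.c_dom a b).trans ⟨fun ⟨ha, hrest⟩ => ⟨Finset.mem_insert_of_mem ha, hrest⟩, ?_⟩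
    rintro ⟨ha, hb, hab, hlim⟩
    rcases Finset.mem_insert.mp ha with rfl | ha
    · obtain ⟨w, hw, hwb⟩ := hp.v_ht b hb
      exact absurd (hwb.trans hab.symm) (hx w hw)
    · exact ⟨ha, hb, hab, hlim⟩
  · intro x₁ y₁ x₂ y₂ n h₁ h₂ hne
    have hx₁ := (hp.mem_of_c_eq_some h₁).1
    have hx₂ := (hp.mem_of_c_eq_some h₂).1
    simp only [QCond.addAboveRoot_lt_iff hxu hx₁, QCond.addAboveRoot_lt_iff hxu hx₂,
      hp.isMeetIn_addAboveRoot_iff hxu hx₁ hx₂]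
    exact hp.c_spec x₁ y₁ x₂ y₂ n h₁ h₂ hne

lemma le_addAboveRoot (hp : QValid Tc ltT meetT p) (hxu : x ∉ p.u) :
    QLe p (p.addAboveRoot x) :=
  ⟨Finset.subset_insert _ _, subset_rfl, fun _ _ h => Or.inl h, fun _ _ _ h => h,
    fun _ ha _ hb _ hm => (hp.isMeetIn_addAboveRoot_iff hxu ha hb).mpr hm⟩

lemma exists_le_exists_nodeHt_eq (hp : QValid Tc ltT meetT p) (x : Node) :
    ∃ q, QValid Tc ltT meetT q ∧ QLe p q ∧ ∃ w ∈ q.u, nodeHt w = nodeHt x := by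
  by_cases h : ∃ w ∈ p.u, nodeHt w = nodeHt x
  · exact ⟨p, hp, QLe.refl p, h⟩
  · push Not at h
    exact ⟨p.addAboveRoot x, hp.addAboveRoot h, hp.le_addAboveRoot fun hx => h x hx rfl,
      x, Finset.mem_insert_self _ _, rfl⟩

lemma c_eq_none_of_not_mem_v (hp : QValid Tc ltT meetT p) {a b : Node} (hb : b ∉ p.v) :
    p.c a b = none :=
  Option.eq_none_iff_forall_ne_some.mpr fun _ h => hb (hp.mem_of_c_eq_some h).2

lemma addToV (hp : QValid Tc ltT meetT p) (hy : y ∈ Tc) (hyv : y ∉ p.v)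
    (hx : ∃ x ∈ p.u, nodeHt x = nodeHt y) (hinj : Set.InjOn col p.u)
    (hfresh : ∀ a b n, p.c a b = some n → ∀ w, col w ≠ n) :
    QValid Tc ltT meetT (p.addToV y col) := by
  constructor
  · exact hp.root_u
  · exact Finset.mem_insert_of_mem hp.root_v
  · intro b hb
    rcases Finset.mem_insert.mp hb with rfl | hb
    exacts [hy, hp.v_sub b hb]
  · intro b hb
    rcases Finset.mem_insert.mp hb with rfl | hb
    exacts [hx, hp.v_ht b hb]
  · exact hp.lt_dom
  · exact hp.lt_irrefl
  · exact hp.lt_trans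
  · exact hp.lt_root
  · exact hp.lt_ht
  · exact hp.lt_pred_linear
  · exact hp.lt_meet
  · intro a b
    by_cases hb : b = y
    · subst hb
      simp [QCond.addToV, hp.c_eq_none_of_not_mem_v hyv]
    · simp only [QCond.addToV, hb, false_and, if_false, Finset.mem_insert, false_or]
      exact hp.c_dom a b
  · intro x₁ y₁ x₂ y₂ n h₁ h₂ hne
    simp only [QCond.addToV] at h₁ h₂
    split_ifs at h₁ h₂ with H₁ H₂ H₂
    · refine absurd ⟨hinj H₁.2.1 H₂.2.1 ?_, H₁.1.trans H₂.1.symm⟩ hne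
      exact Option.some_injective _ (h₁.trans h₂.symm)
    · exact absurd (Option.some_injective _ h₁) (hfresh _ _ _ h₂ x₁)
    · exact absurd (Option.some_injective _ h₂) (hfresh _ _ _ h₁ x₂)
    · exact hp.c_spec x₁ y₁ x₂ y₂ n h₁ h₂ hne

lemma le_addToV (hp : QValid Tc ltT meetT p) (hyv : y ∉ p.v) : QLe p (p.addToV y col) := by
  refine ⟨subset_rfl, Finset.subset_insert _ _, fun _ _ h => h, fun a b n h => ?_,
    fun _ _ _ _ _ hm => hm⟩
  have hby : b ≠ y := fun hby => hyv (hby ▸ (hp.mem_of_c_eq_some h).2)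
  simpa [QCond.addToV, hby] using h

lemma exists_le_mem_v (hp : QValid Tc ltT meetT p) (hy : y ∈ Tc)
    (hx : ∃ x ∈ p.u, nodeHt x = nodeHt y) :
    ∃ q, QValid Tc ltT meetT q ∧ QLe p q ∧ y ∈ q.v := by
  by_cases hyv : y ∈ p.v
  · exact ⟨p, hp, QLe.refl p, hyv⟩
  obtain ⟨N, hN⟩ := hp.exists_color_bound
  obtain ⟨f, hf⟩ := Set.countable_iff_exists_injOn.mp p.u.countable_toSet
  refine ⟨p.addToV y (fun a => N + f a), hp.addToV hy hyv hx ?_ ?_, hp.le_addToV hyv,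
    Finset.mem_insert_self _ _⟩
  · exact fun a ha b hb h => hf ha hb (Nat.add_left_cancel h)
  · intro a b n h w
    have := hN a b n h
    omega

end QValid

theorem QCond_dense_Ey_general (Tc : Set Node) (ltT : Node → Node → Prop)
    (meetT : Node → Node → Node) (δ : Ordinal.{0}) (y : Node) (hy : y ∈ Tc)
    (hyht : nodeHt y = (↑δ : WithBot Ordinal.{0})) :
    (∀ p : QCond, QValid Tc ltT meetT p →
      (∃ x ∈ p.u, nodeHt x = (↑δ : WithBot Ordinal.{0})) →
      ∃ q : QCond, QValid Tc ltT meetT q ∧ QLe p q ∧ y ∈ q.v) ∧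
    ∀ p : QCond, QValid Tc ltT meetT p →
      ∃ q : QCond, QValid Tc ltT meetT q ∧ QLe p q ∧ y ∈ q.v := by
  refine ⟨fun p hp ⟨x, hxu, hxδ⟩ => hp.exists_le_mem_v hy ⟨x, hxu, hxδ.trans hyht.symm⟩,
    fun p hp => ?_⟩
  obtain ⟨p', hp', hpp', hx⟩ := hp.exists_le_exists_nodeHt_eq y
  obtain ⟨q, hq, hp'q, hyq⟩ := hp'.exists_le_mem_v hy hx
  exact ⟨q, hq, hpp'.trans hp'q, hyq⟩

/-- For `δ < ω₁` limit and `y ∈ T` of height `δ`: every condition whose first part has an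
element of height `δ` extends to one with `y` in its second part; consequently
`ℰ_y = {q : y ∈ v^q}` is dense in `Q(T)`. -/
theorem QCond_dense_Ey (Tc : Set Node) (ltT : Node → Node → Prop)
    (meetT : Node → Node → Node) (hT : AmbientOK Tc ltT meetT)
    (δ : Ordinal.{0}) (hδlim : Order.IsSuccLimit δ) (hδ : δ < omega1.{0})
    (y : Node) (hy : y ∈ Tc) (hyht : nodeHt y = (↑δ : WithBot Ordinal.{0})) :
    (∀ p : QCond, QValid Tc ltT meetT p →
      (∃ x ∈ p.u, nodeHt x = (↑δ : WithBot Ordinal.{0})) →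
      ∃ q : QCond, QValid Tc ltT meetT q ∧ QLe p q ∧ y ∈ q.v) ∧
    ∀ p : QCond, QValid Tc ltT meetT p →
      ∃ q : QCond, QValid Tc ltT meetT q ∧ QLe p q ∧ y ∈ q.v :=
  QCond_dense_Ey_general Tc ltT meetT δ y hy hyht
end
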